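/- For any field K and any nonzero c, C ∈ K, the Lie algebras g^6_{00c} and g^6_{00C} are isomorphic. -/
import Mathlib


variable (K : Type*) [Field K]

/-- The bracket of the Lie algebra `g^6_{abc}` on `K^6` (indices `0..5` correspond to
`e_1..e_6`): the only nonzero brackets among basis vectors are `⁅e_1, e_{i+1}⁆ = e_i` for
`2 ≤ i ≤ 5`, `⁅e_4, e_5⁆ = a e_2`, `⁅e_4, e_6⁆ = b e_2 + a e_3` and
`⁅e_5, e_6⁆ = c e_2 + b e_3 + a e_4`. -/
def g6b (a b c : K) (x y : Fin 6 → K) : Fin 6 → K :=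
  ![0,
    x 0 * y 2 - x 2 * y 0 + a * (x 3 * y 4 - x 4 * y 3)
      + b * (x 3 * y 5 - x 5 * y 3) + c * (x 4 * y 5 - x 5 * y 4),
    x 0 * y 3 - x 3 * y 0 + a * (x 3 * y 5 - x 5 * y 3) + b * (x 4 * y 5 - x 5 * y 4),
    x 0 * y 4 - x 4 * y 0 + a * (x 4 * y 5 - x 5 * y 4),
    x 0 * y 5 - x 5 * y 0,
    0]

/-- The Lie algebras `g^6_{abc}` and `g^6_{ABC}` are isomorphic: there is a bijective
linear map preserving the brackets. -/
def g6Iso (a b c A B C : K) : Prop :=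
  ∃ f : (Fin 6 → K) ≃ₗ[K] (Fin 6 → K),
    ∀ x y, f (g6b K a b c x y) = g6b K A B C (f x) (f y)

def sc6 (d : K) (x : Fin 6 → K) : Fin 6 → K :=
  ![x 0, d * x 1, d * x 2, d * x 3, d * x 4, d * x 5]

lemma sc6_add (d : K) (x y : Fin 6 → K) : sc6 K d (x + y) = sc6 K d x + sc6 K d y := by
  funext i
  fin_cases i <;>
    simp [sc6, show (5:Fin 6) = Fin.succ 4 from rfl, Matrix.cons_val_succ] <;> ring

lemma sc6_smul (d m : K) (x : Fin 6 → K) : sc6 K d (m • x) = m • sc6 K d x := by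
  funext i
  fin_cases i <;>
    simp [sc6, show (5:Fin 6) = Fin.succ 4 from rfl, Matrix.cons_val_succ] <;> ring

lemma sc6_inv (d : K) (hd0 : d ≠ 0) (x : Fin 6 → K) : sc6 K d⁻¹ (sc6 K d x) = x := by
  funext i
  fin_cases i <;>
    simp [sc6, show (5:Fin 6) = Fin.succ 4 from rfl, Matrix.cons_val_succ,
      inv_mul_cancel_left₀, hd0]

lemma sc6_bracket (d c C : K) (hdc : C * d = c) (x y : Fin 6 → K) :
    sc6 K d (g6b K 0 0 c x y) = g6b K 0 0 C (sc6 K d x) (sc6 K d y) := by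
  funext i
  fin_cases i <;>
    simp [sc6, g6b, show (5:Fin 6) = Fin.succ 4 from rfl, Matrix.cons_val_succ] <;>
    (try rw [← hdc]) <;> ring

/-- For any nonzero `c, C ∈ K`, the Lie algebras `g^6_{00c}` and `g^6_{00C}` are
isomorphic. -/
theorem stmt5 (c C : K) (hc : c ≠ 0) (hC : C ≠ 0) : g6Iso K 0 0 c 0 0 C := by
  obtain ⟨d, hd⟩ : ∃ d : K, d = c / C := ⟨_, rfl⟩
  have hd0 : d ≠ 0 := hd ▸ div_ne_zero hc hC
  have hdc : C * d = c := by rw [hd]; field_simp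
  refine ⟨{ toFun := sc6 K d
            map_add' := sc6_add K d
            map_smul' := sc6_smul K d
            invFun := sc6 K d⁻¹
            left_inv := sc6_inv K d hd0
            right_inv := fun x => by
              simpa using sc6_inv K d⁻¹ (inv_ne_zero hd0) x }, ?_⟩
  intro x y
  exact sc6_bracket K d c C hdc x y
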